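/- arXiv:math/0506209 — 4 statements merged into one kernel-verified Lean document; each statement's English description precedes it below -/
import Mathlib

section
/- Let Q be a nonzero polynomial in C[z] with exactly m nonzero monomials. Then for any nonzero complex number ξ, the multiplicity of ξ as a root of Q is at most m - 1. -/
open Polynomial

private lemma card_support_derivative_le (Q : Polynomial ℂ) :
    Q.derivative.support.card ≤ (Q.support.erase 0).card := by
  have h : Q.derivative.support ⊆ (Q.support.erase 0).image (· - 1) := by
    intro n hn
    rw [Polynomial.mem_support_iff, Polynomial.coeff_derivative] at hn
    have h1 : Q.coeff (n + 1) ≠ 0 := fun h => hn (by simp [h])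
    refine Finset.mem_image.2 ⟨n + 1, Finset.mem_erase.2 ⟨by simp, Polynomial.mem_support_iff.2 h1⟩, by simp⟩
  calc Q.derivative.support.card ≤ ((Q.support.erase 0).image (· - 1)).card := Finset.card_le_card h
    _ ≤ (Q.support.erase 0).card := Finset.card_image_le

private lemma card_support_divX_le (Q : Polynomial ℂ) :
    Q.divX.support.card ≤ Q.support.card := by
  have h : Q.divX.support.image (· + 1) ⊆ Q.support := by
    intro n hn
    rcases Finset.mem_image.1 hn with ⟨m, hm, rfl⟩
    rw [Polynomial.mem_support_iff, Polynomial.coeff_divX] at hm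
    exact Polynomial.mem_support_iff.2 hm
  calc Q.divX.support.card = (Q.divX.support.image (· + 1)).card :=
        (Finset.card_image_of_injective _ (add_left_injective 1)).symm
    _ ≤ Q.support.card := Finset.card_le_card h

private lemma key (n : ℕ) : ∀ (Q : Polynomial ℂ), Q.natDegree = n → Q ≠ 0 →
    ∀ ξ : ℂ, ξ ≠ 0 → Polynomial.rootMultiplicity ξ Q ≤ Q.support.card - 1 := by
  induction n using Nat.strong_induction_on with
  | _ n ih =>
    intro Q hdeg hQ ξ hξ
    by_cases hroot : Q.IsRoot ξ
    · by_cases h0 : Q.coeff 0 = 0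
      · -- Q = X * Q.divX
        have hQeq : Polynomial.X * Q.divX = Q := by
          have := Q.X_mul_divX_add
          rwa [h0, map_zero, add_zero] at this
        have hdX : Q.divX ≠ 0 := fun h => hQ (by rw [← hQeq, h, mul_zero])
        have hdeglt : Q.divX.natDegree < n := by
          rw [Polynomial.natDegree_divX_eq_natDegree_tsub_one, hdeg]
          have : n ≠ 0 := by
            rintro rfl
            exact hQ (by rw [Polynomial.eq_C_of_natDegree_eq_zero hdeg, h0, map_zero])
          omega
        have := ih _ hdeglt Q.divX rfl hdX ξ hξ
        have hmul := Polynomial.rootMultiplicity_mul (x := ξ) (hQeq.symm ▸ hQ)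
        have hX : Polynomial.rootMultiplicity ξ (Polynomial.X : Polynomial ℂ) = 0 :=
          Polynomial.rootMultiplicity_eq_zero (by simpa [Polynomial.IsRoot] using hξ)
        have hle := card_support_divX_le Q
        have hmuleq : Polynomial.rootMultiplicity ξ Q = Polynomial.rootMultiplicity ξ Q.divX := by
          conv_lhs => rw [← hQeq]
          rw [hmul, hX, zero_add]
        rw [hmuleq]
        omega
      · -- constant term nonzero; use derivative
        by_cases hD : Q.derivative = 0
        · have : Q.natDegree = 0 := Polynomial.natDegree_eq_zero_of_derivative_eq_zero hD
          have hmult : Polynomial.rootMultiplicity ξ Q = 0 := by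
            refine Polynomial.rootMultiplicity_eq_zero ?_
            intro h
            exact hQ (by
              rw [Polynomial.eq_C_of_natDegree_eq_zero this] at h ⊢
              simpa [Polynomial.IsRoot] using h ▸ (by simp [Polynomial.IsRoot.def] at h; simp [h]))
          omega
        · have hdeg0 : Q.natDegree ≠ 0 := fun h =>
            hD (Polynomial.eq_C_of_natDegree_eq_zero h ▸ Polynomial.derivative_C)
          have hdeglt : Q.derivative.natDegree < n := hdeg ▸ Polynomial.natDegree_derivative_lt hdeg0
          have hIH := ih _ hdeglt Q.derivative rfl hD ξ hξ
          have hstep : Polynomial.rootMultiplicity ξ Q - 1 ≤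
              Polynomial.rootMultiplicity ξ Q.derivative :=
            Polynomial.rootMultiplicity_sub_one_le_derivative_rootMultiplicity_of_ne_zero Q ξ hD
          have hcard : Q.derivative.support.card ≤ (Q.support.erase 0).card :=
            card_support_derivative_le Q
          have h0mem : (0 : ℕ) ∈ Q.support := Polynomial.mem_support_iff.2 h0
          have herase : (Q.support.erase 0).card = Q.support.card - 1 :=
            Finset.card_erase_of_mem h0mem
          have hDsupp : 1 ≤ Q.derivative.support.card :=
            Finset.card_pos.2 (Polynomial.support_nonempty.2 hD)
          have hsupp : 1 ≤ Q.support.card := Finset.card_pos.2 (Polynomial.support_nonempty.2 hQ)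
          omega
    · have := Polynomial.rootMultiplicity_eq_zero hroot
      omega

/-- **Descartes-type bound.** A nonzero polynomial `Q ∈ ℂ[z]` with `m` nonzero
monomials has roots of multiplicity at most `m - 1` away from the origin. -/
theorem stmt0 (Q : Polynomial ℂ) (hQ : Q ≠ 0) (ξ : ℂ) (hξ : ξ ≠ 0) :
    Polynomial.rootMultiplicity ξ Q ≤ Q.support.card - 1 :=
  key Q.natDegree Q rfl hQ ξ hξ
end

section
/- Let P(x₁,...,xₙ) be a polynomial whose support lies on the ray { p + t(Δ, -1) : t ∈ R≥0 } where p ∈ N^n and Δ = (a₁/b₁,...,a_{n-1}/b_{n-1}) with aᵢ ∈ N, bᵢ ≥ 1, gcd(aᵢ,bᵢ)=1. Let c be the least common multiple of b₁,...,b_{n-1} and let Q(z) = P(1,...,1,z). Then for every nonzero ξ ∈ C, the multiplicity of ξ as a root of Q is at most ⌊pₙ/c⌋. -/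
open Polynomial

/-- Descartes-style bound: a nonzero polynomial has root multiplicity at a
nonzero point strictly less than the number of its nonzero terms. -/
theorem rootMultiplicity_lt_card_support (Q : Polynomial ℂ) (hQ : Q ≠ 0)
    (ξ : ℂ) (hξ : ξ ≠ 0) : Q.rootMultiplicity ξ < Q.support.card := by
  suffices H : ∀ d (Q : Polynomial ℂ), Q ≠ 0 → Q.natDegree ≤ d →
      Q.rootMultiplicity ξ < Q.support.card from H Q.natDegree Q hQ le_rfl
  clear hQ
  intro d
  induction d using Nat.strong_induction_on with
  | _ d ih =>
  intro Q hQ hd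
  by_cases h0 : Q.coeff 0 = 0
  · -- Q = X * R
    obtain ⟨R, hR⟩ := (Polynomial.X_dvd_iff).2 h0
    have hRne : R ≠ 0 := by rintro rfl; simp at hR; exact hQ hR
    have hdeg : R.natDegree < Q.natDegree := by
      rw [hR, natDegree_mul X_ne_zero hRne, natDegree_X]; omega
    have hmult : Q.rootMultiplicity ξ = R.rootMultiplicity ξ := by
      rw [hR, rootMultiplicity_mul (by rw [← hR]; exact hQ),
        rootMultiplicity_eq_zero (by simp [IsRoot, hξ]), zero_add]
    have hcard : R.support.card ≤ Q.support.card := by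
      apply Finset.card_le_card_of_injOn (fun e => e + 1)
      · intro e he
        simp only [Finset.mem_coe, mem_support_iff] at he ⊢
        rwa [hR, coeff_X_mul]
      · intro x _ y _ h; simpa using h
    rw [hmult]
    exact lt_of_lt_of_le (ih R.natDegree (lt_of_lt_of_le hdeg hd) R hRne le_rfl) hcard
  · have h0mem : (0 : ℕ) ∈ Q.support := mem_support_iff.2 h0
    by_cases hroot : Q.IsRoot ξ
    · -- derivative step
      have hQ' : derivative Q ≠ 0 := by
        intro h
        have := natDegree_eq_zero_of_derivative_eq_zero h
        obtain ⟨a, rfl⟩ := natDegree_eq_zero.1 this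
        simp [IsRoot] at hroot
        simp [hroot] at hQ
      have hdeg : (derivative Q).natDegree < Q.natDegree := by
        apply natDegree_derivative_lt
        intro h
        obtain ⟨a, rfl⟩ := natDegree_eq_zero.1 h
        simp [IsRoot] at hroot
        simp [hroot] at hQ
      have hmult : (derivative Q).rootMultiplicity ξ = Q.rootMultiplicity ξ - 1 :=
        derivative_rootMultiplicity_of_root hroot
      have hpos : 0 < Q.rootMultiplicity ξ := (rootMultiplicity_pos hQ).2 hroot
      have hcard : (derivative Q).support.card < Q.support.card := by
        have : (derivative Q).support.card ≤ (Q.support.erase 0).card := by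
          apply Finset.card_le_card_of_injOn (fun e => e + 1)
          · intro e he
            simp only [Finset.mem_coe, mem_support_iff] at he
            rw [coeff_derivative] at he
            have : Q.coeff (e + 1) ≠ 0 := by
              intro h; rw [h] at he; simp at he
            exact Finset.mem_erase.2 ⟨Nat.succ_ne_zero e, mem_support_iff.2 this⟩
          · intro x _ y _ h; simpa using h
        calc (derivative Q).support.card ≤ (Q.support.erase 0).card := this
          _ < Q.support.card := Finset.card_erase_lt_of_mem h0mem
      have := ih (derivative Q).natDegree (lt_of_lt_of_le hdeg hd) (derivative Q) hQ' le_rfl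
      omega
    · rw [rootMultiplicity_eq_zero hroot]
      exact Finset.card_pos.2 ⟨0, h0mem⟩

/-- Let `P(x₁,…,x_{n+1})` be a polynomial whose support lies on the ray
`{ p + t(Δ, -1) : t ≥ 0 }` where `p ∈ ℕ^{n+1}` and `Δᵢ = aᵢ/bᵢ` in lowest terms.
Let `c = lcm(b₁,…,bₙ)` and `Q(z) = P(1,…,1,z)`.  Then every nonzero `ξ ∈ ℂ`
is a root of `Q` of multiplicity at most `⌊pₙ/c⌋`. -/
theorem stmt10 (n : ℕ) (P : MvPolynomial (Fin (n + 1)) ℂ)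
    (p : Fin (n + 1) → ℕ) (a b : Fin n → ℕ)
    (hb : ∀ i, 1 ≤ b i) (hgcd : ∀ i, Nat.gcd (a i) (b i) = 1)
    (hsupp : ∀ v ∈ P.support, ∃ t : ℚ, 0 ≤ t ∧
      (∀ i : Fin n, (v (Fin.castSucc i) : ℚ) =
        (p (Fin.castSucc i) : ℚ) + t * ((a i : ℚ) / (b i : ℚ))) ∧
      (v (Fin.last n) : ℚ) = (p (Fin.last n) : ℚ) - t)
    (c : ℕ) (hc : c = Finset.univ.lcm b) :
    ∀ ξ : ℂ, ξ ≠ 0 →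
      Polynomial.rootMultiplicity ξ
          (MvPolynomial.aeval
            (fun i : Fin (n + 1) => if i = Fin.last n then Polynomial.X else 1) P)
        ≤ p (Fin.last n) / c := by
  intro ξ hξ
  set f : Fin (n + 1) → Polynomial ℂ :=
    (fun i : Fin (n + 1) => if i = Fin.last n then Polynomial.X else 1) with hf
  set Q : Polynomial ℂ := MvPolynomial.aeval f P with hQdef
  by_cases hQ : Q = 0
  · rw [hQ, rootMultiplicity_zero]; exact Nat.zero_le _
  -- c is positive
  have hcpos : 0 < c := by
    rcases Nat.eq_zero_or_pos c with h | h
    · exfalso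
      rw [h, eq_comm, Finset.lcm_eq_zero_iff] at hc
      obtain ⟨i, -, hi⟩ := hc
      have := hb i; omega
    · exact h
  -- Q as a sum of monomials
  have hQsum : Q = ∑ v ∈ P.support,
      C (MvPolynomial.coeff v P) * X ^ v (Fin.last n) := by
    rw [hQdef, MvPolynomial.aeval_def, MvPolynomial.eval₂_eq']
    apply Finset.sum_congr rfl
    intro v _
    congr 1
    have : ∀ i : Fin (n + 1), f i ^ v i =
        if i = Fin.last n then X ^ v (Fin.last n) else 1 := by
      intro i
      by_cases h : i = Fin.last n
      · subst h; simp [hf]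
      · simp [hf, h]
    rw [Finset.prod_congr rfl fun i _ => this i, Finset.prod_ite_eq' Finset.univ,
      if_pos (Finset.mem_univ _)]
  -- support of Q is contained in the exponents from P's support
  have hQsupp : Q.support ⊆ Finset.image
      (fun k => p (Fin.last n) - k * c) (Finset.range (p (Fin.last n) / c + 1)) := by
    intro e he
    rw [mem_support_iff] at he
    by_contra hmem
    apply he
    rw [hQsum, finset_sum_coeff]
    apply Finset.sum_eq_zero
    intro v hv
    rw [coeff_C_mul, coeff_X_pow]
    suffices h : e ≠ v (Fin.last n) by simp [h]
    rintro rfl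
    -- derive membership
    apply hmem
    obtain ⟨t, ht0, hti, htl⟩ := hsupp v hv
    have hvle : v (Fin.last n) ≤ p (Fin.last n) := by
      have : (v (Fin.last n) : ℚ) ≤ (p (Fin.last n) : ℚ) := by rw [htl]; linarith
      exact_mod_cast this
    set T : ℕ := p (Fin.last n) - v (Fin.last n) with hT
    have hTq : (T : ℚ) = t := by
      push_cast [hT, Nat.cast_sub hvle]
      rw [htl]; ring
    have hbd : ∀ i : Fin n, b i ∣ T := by
      intro i
      have hbi : (0 : ℚ) < (b i : ℚ) := by exact_mod_cast hb i
      have h1 : (v (Fin.castSucc i) : ℚ) * (b i : ℚ) =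
          (p (Fin.castSucc i) : ℚ) * (b i : ℚ) + (T : ℚ) * (a i : ℚ) := by
        rw [hti i, hTq]; field_simp
      have h2 : v (Fin.castSucc i) * b i = p (Fin.castSucc i) * b i + T * a i := by
        exact_mod_cast h1
      have h2' : (v (Fin.castSucc i) : ℤ) * (b i : ℤ) =
          (p (Fin.castSucc i) : ℤ) * (b i : ℤ) + (T : ℤ) * (a i : ℤ) := by
        exact_mod_cast h2
      have hdvd : b i ∣ T * a i := by
        refine Int.natCast_dvd_natCast.mp
          ⟨(v (Fin.castSucc i) : ℤ) - (p (Fin.castSucc i) : ℤ), ?_⟩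
        push_cast
        linear_combination -h2'
      have hco : Nat.Coprime (b i) (a i) := Nat.coprime_comm.mp (hgcd i)
      exact hco.dvd_of_dvd_mul_right hdvd
    have hcT : c ∣ T := by
      rw [hc]
      exact Finset.lcm_dvd fun i _ => hbd i
    obtain ⟨k, hk⟩ := hcT
    have hTle : T ≤ p (Fin.last n) := Nat.sub_le _ _
    have h5 : k * c ≤ p (Fin.last n) := by rw [mul_comm, ← hk]; exact hTle
    refine Finset.mem_image.2 ⟨k, Finset.mem_range.2 ?_, ?_⟩
    · exact Nat.lt_succ_iff.2 ((Nat.le_div_iff_mul_le hcpos).2 h5)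
    · show p (Fin.last n) - k * c = v (Fin.last n)
      rw [mul_comm, ← hk]
      omega
  have hcard : Q.support.card ≤ p (Fin.last n) / c + 1 :=
    le_trans (Finset.card_le_card hQsupp)
      (le_trans (Finset.card_image_le) (by rw [Finset.card_range]))
  have := rootMultiplicity_lt_card_support Q hQ ξ hξ
  omega
end

section
/- Let χ = x(x ∂/∂x - α y ∂/∂y - β z ∂/∂z) + xz ∂/∂y + (y - λx) ∂/∂z with real constants α, β ≥ 0 and λ > 0. After the homogeneous point blow-up x = x̃, y = x̃ỹ, z = x̃z̃, division by x̃, and the translations ỹ → ỹ - λ, z̃ → z̃ - (α+1)λ, the resulting vector field equals x(x ∂/∂x - α' y ∂/∂y - β' z ∂/∂z) + xz ∂/∂y + (y - λ') x ∂/∂z, with α' = α+1, β' = β+1, λ' = α'β'λ. In particular the blown-up germ has the same form as χ with parameters (α', β', λ') in place of (α, β, λ). -/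
/-- The `∂/∂x`-component of the vector field
`χ = x(x ∂/∂x - α y ∂/∂y - β z ∂/∂z) + xz ∂/∂y + (y - λx) ∂/∂z`. -/
def sF (α β lam : ℝ) (x y z : ℝ) : ℝ := x * x

/-- The `∂/∂y`-component of `χ`. -/
def sG (α β lam : ℝ) (x y z : ℝ) : ℝ := -α * x * y + x * z

/-- The `∂/∂z`-component of `χ`. -/
def sH (α β lam : ℝ) (x y z : ℝ) : ℝ := -β * x * z + (y - lam * x)

/-- **Sanz's example, point blow-up.**  After the homogeneous point blow-up
`x = x̃`, `y = x̃ỹ`, `z = x̃z̃` (in the `x`-directional chart, whose components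
are `χ(x)`, `χ(y/x)/x̃⁰·(1/x̃)`-type expressions), followed by the translations
`ỹ → ỹ - λ`, `z̃ → z̃ - (α+1)λ`, the vector field
`χ = x(x ∂/∂x - α y ∂/∂y - β z ∂/∂z) + xz ∂/∂y + (y - λx) ∂/∂z`
becomes the member of the same family with parameters
`(α', β', λ') = (α+1, β+1, (α+1)(β+1)λ)`:
`x(x ∂/∂x - α' y ∂/∂y - β' z ∂/∂z) + xz ∂/∂y + (y - λ'x) ∂/∂z`.
Here `(u,v,w)` are the final coordinates, the old point being
`(x,y,z) = (u, u(v+λ), u(w+(α+1)λ))`; the transformed components are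
`χ(x)∘φ`, `(χ(y)/x - (y/x²)χ(x))∘φ` and `(χ(z)/x - (z/x²)χ(x))∘φ`. -/
theorem stmt18 (α β lam : ℝ) (hα : 0 ≤ α) (hβ : 0 ≤ β) (hlam : 0 < lam)
    (u v w : ℝ) (hu : u ≠ 0) :
    sF α β lam u (u * (v + lam)) (u * (w + (α + 1) * lam)) =
        sF (α + 1) (β + 1) ((α + 1) * (β + 1) * lam) u v w ∧
    (sG α β lam u (u * (v + lam)) (u * (w + (α + 1) * lam)) -
          (v + lam) * sF α β lam u (u * (v + lam)) (u * (w + (α + 1) * lam))) / u =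
        sG (α + 1) (β + 1) ((α + 1) * (β + 1) * lam) u v w ∧
    (sH α β lam u (u * (v + lam)) (u * (w + (α + 1) * lam)) -
          (w + (α + 1) * lam) * sF α β lam u (u * (v + lam)) (u * (w + (α + 1) * lam))) / u =
        sH (α + 1) (β + 1) ((α + 1) * (β + 1) * lam) u v w := by
  refine ⟨rfl, ?_, ?_⟩ <;> simp only [sF, sG, sH] <;> field_simp <;> ring
end

section
/- Let χ = x(x ∂/∂x - α y ∂/∂y - β z ∂/∂z) + xz ∂/∂y + (y - λx) ∂/∂z with α, β ≥ 0, λ > 0. After the blow-up with center the curve {x = y = 0} given by x = x̃, y = x̃ỹ, z = z̃ in the x-directional chart, division by x̃, and the translation ỹ → ỹ - λ, the resulting vector field is x(x ∂/∂x - α' y ∂/∂y - β z ∂/∂z) + (z - λ̄x) ∂/∂y + xy ∂/∂z with α' = α + 1 and λ̄ = α'λ; i.e. it is obtained from χ by the parameter substitution (α,β,λ) → (α+1, β, α'λ) together with interchanging the roles of y and z. -/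
/-- **Sanz's example, curve blow-up.**  After the blow-up with center
`{x = y = 0}` given by `x = x̃`, `y = x̃ỹ`, `z = z̃` in the `x`-directional
chart, followed by the translation `ỹ → ỹ - λ`, the vector field
`χ = x(x ∂/∂x - α y ∂/∂y - β z ∂/∂z) + xz ∂/∂y + (y - λx) ∂/∂z`
becomes `x(x ∂/∂x - α' y ∂/∂y - β z ∂/∂z) + (z - λ̄x) ∂/∂y + xy ∂/∂z` with
`α' = α + 1` and `λ̄ = α'λ`, i.e. the member of the family obtained by the
parameter substitution `(α,β,λ) → (α+1, β, (α+1)λ)` together with interchanging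
the roles of `y` and `z`.  Here `(u,v,w)` are the final coordinates, the old
point being `(x,y,z) = (u, u(v+λ), w)`; the transformed components are
`χ(x)∘φ`, `(χ(y)/x - (y/x²)χ(x))∘φ` and `χ(z)∘φ`. -/
theorem stmt19 (α β lam : ℝ) (hα : 0 ≤ α) (hβ : 0 ≤ β) (hlam : 0 < lam)
    (u v w : ℝ) (hu : u ≠ 0) :
    sF α β lam u (u * (v + lam)) w = u * u ∧
    (sG α β lam u (u * (v + lam)) w -
          (v + lam) * sF α β lam u (u * (v + lam)) w) / u =
        -(α + 1) * u * v + (w - (α + 1) * lam * u) ∧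
    sH α β lam u (u * (v + lam)) w = -β * u * w + u * v := by
  refine ⟨rfl, ?_, by simp [sH]; ring⟩
  field_simp [sG, sF]
  simp only [sG, sF]
  ring
end
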